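/- Let k be a field of characteristic p > 0 and let H be a finite subgroup of PGL₂(k) whose order is a power of p. Then H is elementary abelian: H is commutative and every nontrivial element of H has order p. -/

import Mathlib

/-!
Over an algebraically closed field of characteristic `p`, if `A ^ p ^ s` is the scalar `c = a ^ p ^ s`
then `(A - a) ^ p ^ s = 0`, so `A - a` is a nilpotent `2 × 2` matrix and squares to zero. Rescaling,
every element of `PGL₂` of `p`-power order lifts to some `U = 1 + M` with `M ^ 2 = 0`, whence
`U ^ p = 1 + M ^ p = 1`. Any lift of such an element has `tr ^ 2 = 4 det`. For two such lifts
`U = 1 + M` and `V = 1 + N`, applying this to `U V` and `U V⁻¹ = (1 + M) (1 - N)` gives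
`(2 ± tr (M N)) ^ 2 = 4`, so `tr (M N) = 0`, and for square-zero `2 × 2` matrices this forces
`M N = N M`. A general field embeds into its algebraic closure, and the induced map on `PGL₂` is
injective.
-/

/-- `PGL₂(k)`: the quotient of `GL₂(k)` by its center (the nonzero scalar matrices). -/
abbrev PGL2 (k : Type) [Field k] : Type :=
  GL (Fin 2) k ⧸ Subgroup.center (GL (Fin 2) k)

open Matrix
open scoped MatrixGroups

namespace Matrix

section Nilpotent

variable {n R : Type*} [Fintype n] [DecidableEq n] [CommRing R]

theorem pow_card_eq_zero_of_isNilpotent [IsDomain R] {M : Matrix n n R} (hM : IsNilpotent M) :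
    M ^ Fintype.card n = 0 := by
  have hchar : M.charpoly = Polynomial.X ^ Fintype.card n :=
    sub_eq_zero.mp (isNilpotent_charpoly_sub_pow_of_isNilpotent hM).eq_zero
  simpa [hchar] using aeval_self_charpoly M

theorem trace_eq_zero_of_isNilpotent [IsReduced R] {M : Matrix n n R} (hM : IsNilpotent M) :
    trace M = 0 :=
  (isNilpotent_trace_of_isNilpotent hM).eq_zero

theorem det_eq_zero_of_isNilpotent [IsReduced R] [Nonempty n] {M : Matrix n n R}
    (hM : IsNilpotent M) : det M = 0 := by
  obtain ⟨k, hk⟩ := hM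
  exact IsNilpotent.eq_zero ⟨k, by rw [← det_pow, hk, det_zero]⟩

end Nilpotent

theorem mem_range_scalar_of_map_mem_range_scalar {n R S : Type*} [Fintype n] [DecidableEq n]
    [CommRing R] [CommRing S] {f : R →+* S} (hf : Function.Injective f) {A : Matrix n n R}
    (hA : A.map f ∈ Set.range (scalar n)) : A ∈ Set.range (scalar n) := by
  obtain ⟨c, hc⟩ := hA
  cases isEmpty_or_nonempty n with
  | inl => exact ⟨0, Subsingleton.elim _ _⟩
  | inr h =>
    obtain ⟨i⟩ := h
    have hci : f (A i i) = c := by simpa using (congr_fun₂ hc i i).symm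
    refine ⟨A i i, map_injective hf ?_⟩
    change (scalar n (A i i)).map f = A.map f
    rw [← hc, ← hci, scalar_apply, scalar_apply, diagonal_map (map_zero f)]

theorem exists_isNilpotent_sub_scalar_of_pow_eq_scalar {K n : Type*} [Field K] [IsAlgClosed K]
    {p : ℕ} [Fact p.Prime] [CharP K p] [Fintype n] [DecidableEq n] [Nonempty n]
    {A : Matrix n n K} {s : ℕ} {c : K} (hA : A ^ p ^ s = scalar n c) :
    ∃ a : K, IsNilpotent (A - scalar n a) := by
  obtain ⟨a, ha⟩ := IsAlgClosed.exists_pow_nat_eq c (pow_pos (Fact.out : p.Prime).pos s)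
  refine ⟨a, p ^ s, ?_⟩
  rw [sub_pow_char_pow_of_commute _ _ (scalar_commute a (Commute.all a) A).symm, hA, ← map_pow,
    ha, sub_self]

section FinTwo

variable {R : Type*} [CommRing R]

theorem trace_eq_two_mul_of_sq_sub_scalar_eq_zero [IsReduced R] {A : Matrix (Fin 2) (Fin 2) R}
    {a : R} (hA : (A - scalar (Fin 2) a) ^ 2 = 0) : trace A = 2 * a := by
  have h := trace_eq_zero_of_isNilpotent ⟨2, hA⟩
  simp only [scalar_apply, trace_sub, trace_diagonal, Finset.sum_const, Finset.card_univ,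
    Fintype.card_fin, nsmul_eq_mul, Nat.cast_ofNat] at h
  linear_combination h

theorem det_eq_sq_of_sq_sub_scalar_eq_zero [IsReduced R] {A : Matrix (Fin 2) (Fin 2) R} {a : R}
    (hA : (A - scalar (Fin 2) a) ^ 2 = 0) : det A = a ^ 2 := by
  nontriviality R
  have hchar := eval_charpoly A a
  rw [charpoly_fin_two, ← neg_sub A, det_neg, det_eq_zero_of_isNilpotent ⟨2, hA⟩, mul_zero,
    trace_eq_two_mul_of_sq_sub_scalar_eq_zero hA] at hchar
  simp only [Polynomial.eval_add, Polynomial.eval_sub, Polynomial.eval_mul, Polynomial.eval_pow,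
    Polynomial.eval_X, Polynomial.eval_C] at hchar
  linear_combination hchar

theorem det_eq_one_of_sq_sub_one_eq_zero [IsReduced R] {A : Matrix (Fin 2) (Fin 2) R}
    (hA : (A - 1) ^ 2 = 0) : det A = 1 := by
  simpa using det_eq_sq_of_sq_sub_scalar_eq_zero (a := (1 : R)) (by simpa using hA)

variable [IsDomain R]

theorem commute_of_sq_eq_zero_of_trace_mul_eq_zero {M N : Matrix (Fin 2) (Fin 2) R}
    (hM : M ^ 2 = 0) (hN : N ^ 2 = 0) (hMN : trace (M * N) = 0) : Commute M N := by
  have htrM := trace_eq_zero_of_isNilpotent ⟨2, hM⟩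
  have htrN := trace_eq_zero_of_isNilpotent ⟨2, hN⟩
  have hdetM := det_eq_zero_of_isNilpotent ⟨2, hM⟩
  have hdetN := det_eq_zero_of_isNilpotent ⟨2, hN⟩
  obtain ⟨a, b, c, d, rfl⟩ : ∃ a b c d, M = !![a, b; c, d] := ⟨_, _, _, _, eta_fin_two M⟩
  obtain ⟨e, f, g, h, rfl⟩ : ∃ e f g h, N = !![e, f; g, h] := ⟨_, _, _, _, eta_fin_two N⟩
  simp only [trace_fin_two_of, det_fin_two_of, mul_fin_two] at htrM htrN hdetM hdetN hMN
  obtain rfl : d = -a := by linear_combination htrM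
  obtain rfl : h = -e := by linear_combination htrN
  have h₁ : b * g = c * f := by
    linear_combination (exp := 2)
      (b * g + c * f - 2 * a * e) * hMN + 4 * b * c * hdetN - 4 * e ^ 2 * hdetM
  have h₂ : a * f = b * e := by
    linear_combination (exp := 2) (-b * f) * hMN - f ^ 2 * hdetM - b ^ 2 * hdetN
  have h₃ : c * e = a * g := by
    linear_combination (exp := 2) (-c * g) * hMN - c ^ 2 * hdetN - g ^ 2 * hdetM
  rw [Commute, SemiconjBy, mul_fin_two, mul_fin_two]
  ext i j
  fin_cases i <;> fin_cases j <;> simp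
  · linear_combination h₁
  · linear_combination 2 * h₂
  · linear_combination 2 * h₃
  · linear_combination -h₁

-- `2 - V = V⁻¹`, because `(V - 1) ^ 2 = 0`.
theorem commute_of_sq_sub_one_eq_zero {U V : Matrix (Fin 2) (Fin 2) R} (hU : (U - 1) ^ 2 = 0)
    (hV : (V - 1) ^ 2 = 0) (hUV : trace (U * V) ^ 2 = 4) (hUV' : trace (U * (2 - V)) ^ 2 = 4) :
    Commute U V := by
  have htrM := trace_eq_zero_of_isNilpotent ⟨2, hU⟩
  have htrN := trace_eq_zero_of_isNilpotent ⟨2, hV⟩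
  obtain ⟨M, rfl⟩ : ∃ M, U = 1 + M := ⟨U - 1, (add_sub_cancel _ _).symm⟩
  obtain ⟨N, rfl⟩ : ∃ N, V = 1 + N := ⟨V - 1, (add_sub_cancel _ _).symm⟩
  simp only [add_sub_cancel_left] at hU hV htrM htrN
  have hsub : (2 : Matrix (Fin 2) (Fin 2) R) - (1 + N) = 1 - N := by norm_num [sub_add_eq_sub_sub]
  rw [hsub] at hUV'
  simp only [mul_add, mul_one, add_mul, one_mul, trace_add, trace_one, Fintype.card_fin,
    Nat.cast_ofNat, htrM, add_zero, htrN, zero_add, mul_sub, trace_sub] at hUV hUV'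
  have htr : trace (M * N) = 0 := by
    have h2t : 2 * trace (M * N) ^ 2 = 0 := by linear_combination hUV + hUV'
    rcases mul_eq_zero.mp h2t with h2 | ht
    · linear_combination (exp := 2) hUV - 2 * trace (M * N) * h2
    · exact pow_eq_zero_iff two_ne_zero |>.mp ht
  exact (Commute.one_left _).add_left
    ((Commute.one_right M).add_right (commute_of_sq_eq_zero_of_trace_mul_eq_zero hU hV htr))

end FinTwo

end Matrix

namespace Matrix.ProjGenLinGroup

theorem map_injective {n R S : Type*} [Fintype n] [DecidableEq n] [CommRing R] [CommRing S]
    {f : R →+* S} (hf : Function.Injective f) : Function.Injective (map (n := n) f) := by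
  rw [injective_iff_map_eq_one]
  intro g hg
  induction g using induction_on with | mk A => ?_
  rw [map_mk, mk_eq_one, GeneralLinearGroup.mem_center_iff_val_mem_range_scalar] at hg
  rw [mk_eq_one, GeneralLinearGroup.mem_center_iff_val_mem_range_scalar]
  exact mem_range_scalar_of_map_mem_range_scalar hf hg

section AlgClosed

variable {K : Type*} [Field K] [IsAlgClosed K] {p : ℕ} [Fact p.Prime] [CharP K p]

theorem exists_sq_sub_scalar_eq_zero_of_mk_pow_eq_one {A : GL (Fin 2) K} {s : ℕ}
    (hA : mk A ^ p ^ s = 1) :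
    ∃ a : K, ((A : Matrix (Fin 2) (Fin 2) K) - scalar (Fin 2) a) ^ 2 = 0 := by
  rw [← map_pow, mk_eq_one, GeneralLinearGroup.mem_center_iff_val_mem_range_scalar] at hA
  obtain ⟨c, hc⟩ := hA
  obtain ⟨a, ha⟩ := exists_isNilpotent_sub_scalar_of_pow_eq_scalar
    (by rw [← Units.val_pow_eq_pow_val, ← hc] : (A : Matrix (Fin 2) (Fin 2) K) ^ p ^ s = scalar _ c)
  exact ⟨a, by simpa using pow_card_eq_zero_of_isNilpotent ha⟩

theorem trace_sq_eq_four_mul_det_of_mk_pow_eq_one {A : GL (Fin 2) K} {s : ℕ}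
    (hA : mk A ^ p ^ s = 1) :
    trace (A : Matrix (Fin 2) (Fin 2) K) ^ 2 = 4 * det (A : Matrix (Fin 2) (Fin 2) K) := by
  obtain ⟨a, ha⟩ := exists_sq_sub_scalar_eq_zero_of_mk_pow_eq_one hA
  rw [trace_eq_two_mul_of_sq_sub_scalar_eq_zero ha, det_eq_sq_of_sq_sub_scalar_eq_zero ha]
  ring

theorem exists_mk_eq_and_sq_sub_one_eq_zero {g : PGL(2, K)} {s : ℕ} (hg : g ^ p ^ s = 1) :
    ∃ U : GL (Fin 2) K, mk U = g ∧ ((U : Matrix (Fin 2) (Fin 2) K) - 1) ^ 2 = 0 := by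
  induction g using induction_on with | mk A => ?_
  obtain ⟨a, ha⟩ := exists_sq_sub_scalar_eq_zero_of_mk_pow_eq_one hg
  have ha₀ : a ≠ 0 := by
    rintro rfl
    simpa [det_eq_sq_of_sq_sub_scalar_eq_zero ha] using A.isUnit.map detMonoidHom
  set u := Units.mk0 a ha₀
  refine ⟨A * GeneralLinearGroup.scalar (Fin 2) u⁻¹, by simp, ?_⟩
  have hU : ((A * GeneralLinearGroup.scalar (Fin 2) u⁻¹ : GL (Fin 2) K) : Matrix (Fin 2) (Fin 2) K)
      - 1 = a⁻¹ • ((A : Matrix (Fin 2) (Fin 2) K) - scalar (Fin 2) a) := by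
    rw [Units.val_mul, GeneralLinearGroup.coe_scalar, Units.val_inv_eq_inv_val, Units.val_mk0,
      scalar_apply, ← smul_eq_mul_diagonal, smul_sub, scalar_apply, ← smul_one_eq_diagonal,
      smul_smul, inv_mul_cancel₀ ha₀, one_smul]
  rw [hU, _root_.smul_pow, ha, smul_zero]

theorem pow_char_eq_one_of_isAlgClosed {g : PGL(2, K)} {s : ℕ} (hg : g ^ p ^ s = 1) :
    g ^ p = 1 := by
  obtain ⟨U, rfl, hU⟩ := exists_mk_eq_and_sq_sub_one_eq_zero hg
  have hUp : U ^ p = 1 := by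
    ext1
    rw [Units.val_pow_eq_pow_val, Units.val_one, ← sub_eq_zero, ← one_pow p,
      ← sub_pow_char_of_commute _ (Commute.one_right _)]
    exact pow_eq_zero_of_le (Fact.out : p.Prime).two_le hU
  rw [← map_pow, hUp, map_one]

theorem commute_of_isAlgClosed {g h : PGL(2, K)} (hg : g ^ p = 1) (hh : h ^ p = 1)
    (hgh : (g * h) ^ p = 1) (hgh' : (g * h⁻¹) ^ p = 1) : Commute g h := by
  rw [← pow_one p] at hg hh hgh hgh'
  obtain ⟨U, rfl, hU⟩ := exists_mk_eq_and_sq_sub_one_eq_zero hg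
  obtain ⟨V, rfl, hV⟩ := exists_mk_eq_and_sq_sub_one_eq_zero hh
  have hVinv : ((V⁻¹ : GL (Fin 2) K) : Matrix (Fin 2) (Fin 2) K) = 2 - V :=
    Units.inv_eq_of_mul_eq_one_right <| by
      rw [show (V : Matrix (Fin 2) (Fin 2) K) * (2 - V) = 1 - (V - 1) ^ 2 by noncomm_ring, hV,
        sub_zero]
  have hV' : ((2 - V : Matrix (Fin 2) (Fin 2) K) - 1) ^ 2 = 0 := by
    rw [sub_right_comm, show (2 : Matrix (Fin 2) (Fin 2) K) - 1 = 1 by norm_num, ← neg_sub,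
      neg_sq, hV]
  have hUV := trace_sq_eq_four_mul_det_of_mk_pow_eq_one (A := U * V) (by rwa [map_mul])
  have hUV' := trace_sq_eq_four_mul_det_of_mk_pow_eq_one (A := U * V⁻¹) (by rwa [map_mul, map_inv])
  rw [Units.val_mul, det_mul, det_eq_one_of_sq_sub_one_eq_zero hU,
    det_eq_one_of_sq_sub_one_eq_zero hV, mul_one, mul_one] at hUV
  rw [Units.val_mul, hVinv, det_mul, det_eq_one_of_sq_sub_one_eq_zero hU,
    det_eq_one_of_sq_sub_one_eq_zero hV', mul_one, mul_one] at hUV'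
  exact (show Commute U V from Units.ext (commute_of_sq_sub_one_eq_zero hU hV hUV hUV')).map mk

end AlgClosed

variable {k : Type*} [Field k] {p : ℕ} [Fact p.Prime] [CharP k p]

theorem pow_char_eq_one_of_pow_char_pow_eq_one {g : PGL(2, k)} {s : ℕ} (hg : g ^ p ^ s = 1) :
    g ^ p = 1 := by
  apply map_injective (algebraMap k (AlgebraicClosure k)).injective
  rw [map_pow, map_one]
  exact pow_char_eq_one_of_isAlgClosed (s := s) (by rw [← map_pow, hg, map_one])

theorem commute_of_pow_char_eq_one {g h : PGL(2, k)} (hg : g ^ p = 1) (hh : h ^ p = 1)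
    (hgh : (g * h) ^ p = 1) (hgh' : (g * h⁻¹) ^ p = 1) : Commute g h := by
  apply map_injective (algebraMap k (AlgebraicClosure k)).injective
  rw [map_mul, map_mul]
  refine (commute_of_isAlgClosed ?_ ?_ ?_ ?_).eq <;>
    simp only [← map_pow, ← map_mul, ← map_inv, map_one, hg, hh, hgh, hgh']

end Matrix.ProjGenLinGroup

/-- In characteristic `p > 0`, every finite subgroup of `PGL₂(k)` of `p`-power order is
elementary abelian: it is commutative and all its nontrivial elements have order `p`. -/
theorem p_subgroup_PGL2_elementary_abelian
    (k : Type) [Field k] (p : ℕ) [Fact p.Prime] [CharP k p]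
    (H : Subgroup (PGL2 k)) (hcard : ∃ s : ℕ, Nat.card H = p ^ s) :
    (∀ a b : H, a * b = b * a) ∧ (∀ h : H, h ≠ 1 → orderOf h = p) := by
  obtain ⟨s, hs⟩ := hcard
  have hH : ∀ x ∈ H, x ^ p = 1 := fun x hx => by
    have hx := congrArg Subtype.val (pow_card_eq_one' (G := H) (x := ⟨x, hx⟩))
    rw [hs] at hx
    exact ProjGenLinGroup.pow_char_eq_one_of_pow_char_pow_eq_one hx
  refine ⟨fun a b => Subtype.ext ?_, fun h hne => orderOf_eq_prime (Subtype.ext (hH _ h.2)) hne⟩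
  exact (ProjGenLinGroup.commute_of_pow_char_eq_one (hH _ a.2) (hH _ b.2)
    (hH _ (mul_mem a.2 b.2)) (hH _ (mul_mem a.2 (inv_mem b.2)))).eq
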